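/- Let n ∈ ℕ, 0 < d ≤ n, 0 < q < p < ∞, and p < r < ∞. Then there is a constant C > 0 (independent of f and E) such that for every measurable function f on ℝ^n and every set E ⊆ ℝ^n with 0 < H^d(E) < ∞, H^d(E)^{1/p − 1/q} (∫_E |f|^q dH^d)^{1/q} ≤ C (q ((r−p)/(r(p−q)))^{(r−p)/r})^{1/p} ‖f χ_E‖_{L^{p,r}(H^d)}. -/

import Mathlib

/-!
Let `h s = H^d({|f χ_E| > s})`, which is at most `H^d(E)`. The Choquet integral is a layer-cake
integral, so after the substitution `t = s^q` it reads `∫_E |f|^q dH^d = ∫_0^∞ q s^(q-1) h(s) ds`.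
Split this integral at a height `A`: the part below `A` is at most `H^d(E) A^q`, and Hölder's
inequality with exponents `r/p` and `r/(r-p)` bounds the part above `A` by `q K A^(q-p) N^p`, where
`N` is the `L^{p,r}` quasinorm of `f χ_E` and `K = ((r-p)/(r(p-q)))^((r-p)/r)`. The choice
`A = N H^d(E)^(-1/p)` makes the two terms equal.
-/

open MeasureTheory Set ENNReal

noncomputable section

/-- The axis-parallel closed cube with corner `a` and side length `l`. -/
def cubeSet (n : ℕ) (a : Fin n → ℝ) (l : ℝ) : Set (Fin n → ℝ) :=
  {x | ∀ i, a i ≤ x i ∧ x i ≤ a i + l}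

/-- The `d`-dimensional Hausdorff content of `E ⊆ ℝⁿ`, defined as the infimum of
`∑ ℓ(Q_j)^d` over all countable coverings of `E` by axis-parallel cubes. -/
def hContent (n : ℕ) (d : ℝ) (E : Set (Fin n → ℝ)) : ℝ≥0∞ :=
  ⨅ (c : ℕ → (Fin n → ℝ) × ℝ) (_ : E ⊆ ⋃ j, cubeSet n (c j).1 (c j).2),
    ∑' j, ENNReal.ofReal ((c j).2) ^ d

/-- The Choquet integral `∫ g dH^d = ∫_0^∞ H^d({x : g x > t}) dt` of a
nonnegative (`ℝ≥0∞`-valued) function. -/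
def choquetIntegral (n : ℕ) (d : ℝ) (g : (Fin n → ℝ) → ℝ≥0∞) : ℝ≥0∞ :=
  ∫⁻ t in Set.Ioi (0 : ℝ), hContent n d {x | ENNReal.ofReal t < g x}

/-- The Choquet `L^p(H^d)` norm of an `ℝ≥0∞`-valued function. -/
def choquetLpNormE (n : ℕ) (d p : ℝ) (g : (Fin n → ℝ) → ℝ≥0∞) : ℝ≥0∞ :=
  (choquetIntegral n d fun x => g x ^ p) ^ (1 / p)

/-- The Choquet `L^p(H^d)` norm of a real-valued function. -/
def choquetLpNorm (n : ℕ) (d p : ℝ) (f : (Fin n → ℝ) → ℝ) : ℝ≥0∞ :=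
  choquetLpNormE n d p fun x => ENNReal.ofReal |f x|

/-- The weak Choquet `L^p(H^d)` norm of an `ℝ≥0∞`-valued function. -/
def weakNormE (n : ℕ) (d p : ℝ) (g : (Fin n → ℝ) → ℝ≥0∞) : ℝ≥0∞ :=
  ⨆ (t : ℝ) (_ : 0 < t),
    ENNReal.ofReal t * hContent n d {x | ENNReal.ofReal t < g x} ^ (1 / p)

/-- The weak Choquet `L^p(H^d)` norm of a real-valued function. -/
def weakChoquetLpNorm (n : ℕ) (d p : ℝ) (f : (Fin n → ℝ) → ℝ) : ℝ≥0∞ :=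
  weakNormE n d p fun x => ENNReal.ofReal |f x|

/-- The Choquet integral `∫_E |f|^q dH^d` over a set `E`. -/
def choquetSetLq (n : ℕ) (d q : ℝ) (E : Set (Fin n → ℝ)) (f : (Fin n → ℝ) → ℝ) : ℝ≥0∞ :=
  choquetIntegral n d (E.indicator fun x => ENNReal.ofReal |f x| ^ q)

/-- The Choquet–Morrey `𝓜^p_q(H^d)` norm of an `ℝ≥0∞`-valued function. -/
def morreyNormE (n : ℕ) (d p q : ℝ) (g : (Fin n → ℝ) → ℝ≥0∞) : ℝ≥0∞ :=
  ⨆ (a : Fin n → ℝ) (l : ℝ) (_ : 0 < l),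
    ENNReal.ofReal (l ^ (d / p - d / q)) *
      (choquetIntegral n d ((cubeSet n a l).indicator fun x => g x ^ q)) ^ (1 / q)

/-- The Choquet–Morrey `𝓜^p_q(H^d)` norm of a real-valued function. -/
def morreyNorm (n : ℕ) (d p q : ℝ) (f : (Fin n → ℝ) → ℝ) : ℝ≥0∞ :=
  morreyNormE n d p q fun x => ENNReal.ofReal |f x|

/-- The Lorentz `L^{p,r}(H^d)` quasinorm of a real-valued function. -/
def lorentzNorm (n : ℕ) (d p r : ℝ) (f : (Fin n → ℝ) → ℝ) : ℝ≥0∞ :=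
  (∫⁻ t in Set.Ioi (0 : ℝ),
      ((ENNReal.ofReal t) ^ p * hContent n d {x | t < |f x|}) ^ (r / p) *
        (ENNReal.ofReal t)⁻¹) ^ (1 / r)

/-- The fractional maximal operator `M_α` (with values in `ℝ≥0∞`). -/
def fracMaximal (n : ℕ) (α : ℝ) (f : (Fin n → ℝ) → ℝ) (x : Fin n → ℝ) : ℝ≥0∞ :=
  ⨆ (a : Fin n → ℝ) (l : ℝ) (_ : 0 < l) (_ : x ∈ cubeSet n a l),
    ENNReal.ofReal (l ^ (α - (n : ℝ))) * ∫⁻ y in cubeSet n a l, ENNReal.ofReal |f y|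

/-- The Euclidean norm on `Fin n → ℝ`. -/
def euclNorm {n : ℕ} (x : Fin n → ℝ) : ℝ := Real.sqrt (∑ i, x i ^ 2)

/-- The fractional integral operator `I_α`. -/
def fracIntegral (n : ℕ) (α : ℝ) (f : (Fin n → ℝ) → ℝ) (x : Fin n → ℝ) : ℝ :=
  ∫ y, f y / euclNorm (x - y) ^ ((n : ℝ) - α)

open Filter Topology

theorem hContent_mono (n : ℕ) (d : ℝ) {E F : Set (Fin n → ℝ)} (h : E ⊆ F) :
    hContent n d E ≤ hContent n d F :=
  le_iInf₂ fun c hc => iInf₂_le c (h.trans hc)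

theorem antitone_hContent_setOf_lt (n : ℕ) (d : ℝ) (g : (Fin n → ℝ) → ℝ) :
    Antitone fun t => hContent n d {x | t < g x} :=
  fun _ _ hst => hContent_mono n d fun _ hx => hst.trans_lt hx

theorem hContent_setOf_lt_abs_indicator_le (n : ℕ) (d : ℝ) (E : Set (Fin n → ℝ))
    (f : (Fin n → ℝ) → ℝ) {t : ℝ} (ht : 0 ≤ t) :
    hContent n d {x | t < |E.indicator f x|} ≤ hContent n d E :=
  hContent_mono n d fun x hx => by
    by_contra hxE
    simp [indicator_of_notMem hxE, ht.not_gt] at hx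

theorem lintegral_Ioi_ofReal_mul_comp_rpow {c : ℝ} (hc : 0 < c) (g : ℝ → ℝ≥0∞) :
    ∫⁻ x in Ioi 0, ENNReal.ofReal (c * x ^ (c - 1)) * g (x ^ c) = ∫⁻ y in Ioi 0, g y := by
  have himage : (fun x : ℝ => x ^ c) '' Ioi 0 = Ioi 0 := by
    refine Subset.antisymm (image_subset_iff.2 fun x hx => Real.rpow_pos_of_pos hx c)
      fun y hy => ⟨y ^ c⁻¹, Real.rpow_pos_of_pos hy _, Real.rpow_inv_rpow (le_of_lt hy) hc.ne'⟩
  have hinj : InjOn (fun x : ℝ => x ^ c) (Ioi 0) := fun x hx y hy hxy =>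
    Real.rpow_left_injOn hc.ne' (mem_Ioi.1 hx).le (mem_Ioi.1 hy).le hxy
  have hderiv : ∀ x ∈ Ioi (0 : ℝ), HasDerivWithinAt (fun x : ℝ => x ^ c) (c * x ^ (c - 1))
      (Ioi 0) x := fun x hx =>
    (Real.hasDerivAt_rpow_const (Or.inl (mem_Ioi.1 hx).ne')).hasDerivWithinAt
  conv_rhs =>
    rw [← himage, lintegral_image_eq_lintegral_abs_deriv_mul measurableSet_Ioi hderiv hinj g]
  refine setLIntegral_congr_fun measurableSet_Ioi fun x hx => ?_
  rw [abs_of_nonneg (by have := mem_Ioi.1 hx; positivity)]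

theorem lintegral_Ioc_ofReal_mul_rpow_sub_one {q : ℝ} (hq : 0 < q) {A : ℝ} (hA : 0 ≤ A) :
    ∫⁻ s in Ioc 0 A, ENNReal.ofReal (q * s ^ (q - 1)) = ENNReal.ofReal (A ^ q) := by
  have hint : IntervalIntegrable (fun s : ℝ => q * s ^ (q - 1)) volume 0 A :=
    (intervalIntegral.intervalIntegrable_rpow' (by linarith)).const_mul q
  rw [← ofReal_integral_eq_lintegral_ofReal
    ((intervalIntegrable_iff_integrableOn_Ioc_of_le hA).1 hint)
    ((ae_restrict_iff' measurableSet_Ioc).2 (Eventually.of_forall fun s hs => by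
      have := hs.1; positivity)),
    ← intervalIntegral.integral_of_le hA, intervalIntegral.integral_const_mul,
    integral_rpow (Or.inl (by linarith)), sub_add_cancel, Real.zero_rpow hq.ne', sub_zero,
    mul_div_cancel₀ _ hq.ne']

theorem choquetSetLq_eq_lintegral (n : ℕ) (d : ℝ) {q : ℝ} (hq : 0 < q)
    (E : Set (Fin n → ℝ)) (f : (Fin n → ℝ) → ℝ) :
    choquetSetLq n d q E f = ∫⁻ s in Ioi 0,
      ENNReal.ofReal (q * s ^ (q - 1)) * hContent n d {x | s < |E.indicator f x|} := by
  rw [choquetSetLq, choquetIntegral, ← lintegral_Ioi_ofReal_mul_comp_rpow hq]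
  refine setLIntegral_congr_fun measurableSet_Ioi fun s hs => ?_
  have hs : 0 ≤ s := (mem_Ioi.1 hs).le
  congr 3
  ext x
  by_cases hx : x ∈ E
  · simp only [indicator_of_mem hx,
      ENNReal.ofReal_rpow_of_nonneg (abs_nonneg _) hq.le,
      ENNReal.ofReal_lt_ofReal_iff_of_nonneg (Real.rpow_nonneg hs q),
      Real.rpow_lt_rpow_iff hs (abs_nonneg _) hq]
  · simp [hx, hs]

theorem lintegral_Ioi_ofReal_rpow {a A : ℝ} (ha : a < -1) (hA : 0 < A) :
    ∫⁻ s in Ioi A, ENNReal.ofReal s ^ a = ENNReal.ofReal (-A ^ (a + 1) / (a + 1)) := by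
  rw [← integral_Ioi_rpow_of_lt ha hA, ofReal_integral_eq_lintegral_ofReal
    (integrableOn_Ioi_rpow_of_lt ha hA) ((ae_restrict_iff' measurableSet_Ioi).2
      (Eventually.of_forall fun s hs => Real.rpow_nonneg (hA.trans hs).le a))]
  exact setLIntegral_congr_fun measurableSet_Ioi fun s hs =>
    ENNReal.ofReal_rpow_of_pos (hA.trans hs)

/-- The `r`-th power of the `L^{p,r}` quasinorm of a function with distribution function `φ`. -/
def lorentzIntegral (p r : ℝ) (φ : ℝ → ℝ≥0∞) : ℝ≥0∞ :=
  ∫⁻ t in Ioi 0, (ENNReal.ofReal t ^ p * φ t) ^ (r / p) * (ENNReal.ofReal t)⁻¹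

theorem lorentzNorm_eq_lorentzIntegral (n : ℕ) (d p r : ℝ) (f : (Fin n → ℝ) → ℝ) :
    lorentzNorm n d p r f = lorentzIntegral p r (fun t => hContent n d {x | t < |f x|}) ^ (1 / r) :=
  rfl

theorem Real.rpow_mul_rpow_add_rpow_eq {p q c H N : ℝ} (hp : 0 < p) (hq : 0 < q) (hc : 0 ≤ c)
    (hH : 0 < H) (hN : 0 < N) :
    H ^ (1 / p - 1 / q) *
        (H * (N * H ^ (-p⁻¹)) ^ q + c * (N * H ^ (-p⁻¹)) ^ (q - p) * N ^ p) ^ (1 / q) =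
      (1 + c) ^ (1 / q) * N := by
  set A := N * H ^ (-p⁻¹)
  have hA : 0 < A := by positivity
  have hNA : N = A * H ^ p⁻¹ := by
    rw [mul_assoc, ← Real.rpow_add hH, neg_add_cancel, Real.rpow_zero, mul_one]
  have hbalance : A ^ (q - p) * N ^ p = H * A ^ q := by
    have : A ^ p ≠ 0 := by positivity
    rw [hNA, Real.mul_rpow hA.le (by positivity), ← Real.rpow_mul hH.le, inv_mul_cancel₀ hp.ne',
      Real.rpow_one, Real.rpow_sub hA]
    field_simp
  have hsum : H * A ^ q + c * A ^ (q - p) * N ^ p = (1 + c) * (H * A ^ q) := by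
    rw [mul_assoc c, hbalance]
    ring
  rw [hsum, Real.mul_rpow (by positivity) (by positivity), Real.mul_rpow hH.le (by positivity),
    ← Real.rpow_mul hA.le, mul_one_div_cancel hq.ne', Real.rpow_one]
  calc H ^ (1 / p - 1 / q) * ((1 + c) ^ (1 / q) * (H ^ (1 / q) * A))
      = (1 + c) ^ (1 / q) * (A * (H ^ (1 / p - 1 / q) * H ^ (1 / q))) := by ring
    _ = (1 + c) ^ (1 / q) * N := by rw [← Real.rpow_add hH, sub_add_cancel, one_div p, ← hNA]

theorem lintegral_Ioi_rpow_sub_one_mul_le_Lp_mul_Lq {p q r : ℝ} (hp : 0 < p) (hpr : p < r)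
    {φ : ℝ → ℝ≥0∞} (hφ : Measurable φ) {A : ℝ} (hA : 0 < A) :
    ∫⁻ s in Ioi A, ENNReal.ofReal s ^ (q - 1) * φ s ≤
      (∫⁻ s in Ioi A, (ENNReal.ofReal s ^ p * φ s) ^ (r / p) * (ENNReal.ofReal s)⁻¹) ^ (p / r) *
        (∫⁻ s in Ioi A, ENNReal.ofReal s ^ ((q - p) * r / (r - p) - 1)) ^ ((r - p) / r) := by
  have hr : 0 < r := hp.trans hpr
  have hrp : 0 < r - p := by linarith
  set u : ℝ → ℝ≥0∞ := fun s => ENNReal.ofReal s ^ p * φ s * ENNReal.ofReal s ^ (-(p / r))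
  set v : ℝ → ℝ≥0∞ := fun s => ENNReal.ofReal s ^ (q - 1 - p + p / r)
  have hmeas : ∀ a : ℝ, Measurable fun s : ℝ => ENNReal.ofReal s ^ a := fun a =>
    ENNReal.measurable_ofReal.pow_const a
  have huv : ∀ s ∈ Ioi A, ENNReal.ofReal s ^ (q - 1) * φ s = (u * v) s := by
    intro s hs
    have hs0 : ENNReal.ofReal s ≠ 0 := (ENNReal.ofReal_pos.2 (hA.trans hs)).ne'
    have hexp : ENNReal.ofReal s ^ p * ENNReal.ofReal s ^ (-(p / r)) *
        ENNReal.ofReal s ^ (q - 1 - p + p / r) = ENNReal.ofReal s ^ (q - 1) := by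
      rw [← ENNReal.rpow_add _ _ hs0 ENNReal.ofReal_ne_top,
        ← ENNReal.rpow_add _ _ hs0 ENNReal.ofReal_ne_top]
      ring_nf
    simp only [u, v, Pi.mul_apply, ← hexp]
    ring
  have hu : ∀ s, u s ^ (r / p) = (ENNReal.ofReal s ^ p * φ s) ^ (r / p) * (ENNReal.ofReal s)⁻¹ :=
    fun s => by
      rw [ENNReal.mul_rpow_of_nonneg _ _ (by positivity), ← ENNReal.rpow_mul,
        show -(p / r) * (r / p) = -1 by field_simp, ENNReal.rpow_neg_one]
  have hv : ∀ s, v s ^ (r / (r - p)) = ENNReal.ofReal s ^ ((q - p) * r / (r - p) - 1) :=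
    fun s => by
      rw [← ENNReal.rpow_mul]
      congr 1
      field_simp
      ring
  have hconj : (r / p).HolderConjugate (r / (r - p)) := by
    rw [Real.holderConjugate_iff]
    refine ⟨(one_lt_div hp).2 hpr, ?_⟩
    field_simp
    ring
  have hum : Measurable u := ((hmeas p).mul hφ).mul (hmeas _)
  have hvm : Measurable v := hmeas _
  calc ∫⁻ s in Ioi A, ENNReal.ofReal s ^ (q - 1) * φ s
      = ∫⁻ s in Ioi A, (u * v) s := setLIntegral_congr_fun measurableSet_Ioi huv
    _ ≤ _ := by
      simpa only [one_div_div, hu, hv] using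
        ENNReal.lintegral_mul_le_Lp_mul_Lq _ hconj hum.aemeasurable hvm.aemeasurable

/-- The `L^{r/(r-p)}((1, ∞), ds/s)` norm of `s ↦ s^(q-p)`, that is `(∫_1^∞ s^(γ-1) ds)^((r-p)/r)`
with `γ = -r(p-q)/(r-p)`. -/
def kolmogorovConst (p q r : ℝ) : ℝ := ((r - p) / (r * (p - q))) ^ ((r - p) / r)

section Kolmogorov

variable {p q r : ℝ} (hq : 0 < q) (hqp : q < p) (hpr : p < r)
include hq hqp hpr

theorem kolmogorovConst_pos : 0 < kolmogorovConst p q r :=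
  Real.rpow_pos_of_pos (div_pos (by linarith) (mul_pos (by linarith) (by linarith))) _

theorem lintegral_Ioi_ofReal_rpow_rpow_eq {A : ℝ} (hA : 0 < A) :
    (∫⁻ s in Ioi A, ENNReal.ofReal s ^ ((q - p) * r / (r - p) - 1)) ^ ((r - p) / r) =
      ENNReal.ofReal (kolmogorovConst p q r * A ^ (q - p)) := by
  have hr : 0 < r := by linarith
  have hrp : 0 < r - p := by linarith
  have hpq : 0 < p - q := by linarith
  set γ := (q - p) * r / (r - p) with hγ
  have hγneg : γ < 0 := div_neg_of_neg_of_pos (mul_neg_of_neg_of_pos (by linarith) hr) hrp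
  have hγA : -A ^ (γ - 1 + 1) / (γ - 1 + 1) = A ^ γ * ((r - p) / (r * (p - q))) := by
    rw [sub_add_cancel, hγ, ← neg_sub p q]
    field_simp
  rw [lintegral_Ioi_ofReal_rpow (by linarith) hA, hγA,
    ENNReal.ofReal_rpow_of_nonneg (by positivity) (div_pos hrp hr).le,
    Real.mul_rpow (by positivity) (by positivity), ← Real.rpow_mul hA.le, kolmogorovConst,
    mul_comm]
  congr 3
  rw [hγ]
  field_simp

theorem lintegral_Ioi_ofReal_mul_rpow_sub_one_le {φ : ℝ → ℝ≥0∞} (hφ : Measurable φ)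
    {A : ℝ} (hA : 0 < A) :
    ∫⁻ s in Ioi A, ENNReal.ofReal (q * s ^ (q - 1)) * φ s ≤
      ENNReal.ofReal (q * kolmogorovConst p q r * A ^ (q - p)) *
        lorentzIntegral p r φ ^ (p / r) := by
  have hp : 0 < p := hq.trans hqp
  calc ∫⁻ s in Ioi A, ENNReal.ofReal (q * s ^ (q - 1)) * φ s
      = ENNReal.ofReal q * ∫⁻ s in Ioi A, ENNReal.ofReal s ^ (q - 1) * φ s := by
        rw [← lintegral_const_mul' _ _ ENNReal.ofReal_ne_top]
        refine setLIntegral_congr_fun measurableSet_Ioi fun s hs => ?_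
        rw [ENNReal.ofReal_mul hq.le, ENNReal.ofReal_rpow_of_pos (hA.trans hs), mul_assoc]
    _ ≤ ENNReal.ofReal q * (lorentzIntegral p r φ ^ (p / r) *
          ENNReal.ofReal (kolmogorovConst p q r * A ^ (q - p))) := by
      grw [lintegral_Ioi_rpow_sub_one_mul_le_Lp_mul_Lq hp hpr hφ hA,
        lintegral_Ioi_ofReal_rpow_rpow_eq hq hqp hpr hA,
        lintegral_mono_set (Ioi_subset_Ioi hA.le)]
      · rfl
      · exact div_nonneg hp.le (hp.trans hpr).le
    _ = _ := by
      rw [mul_assoc q, ENNReal.ofReal_mul hq.le]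
      ring

theorem lintegral_Ioi_ofReal_mul_rpow_sub_one_le_add {φ : ℝ → ℝ≥0∞} (hφ : Measurable φ)
    {H : ℝ≥0∞} (hφH : ∀ s ∈ Ioi 0, φ s ≤ H) {A : ℝ} (hA : 0 < A) :
    ∫⁻ s in Ioi 0, ENNReal.ofReal (q * s ^ (q - 1)) * φ s ≤ H * ENNReal.ofReal (A ^ q) +
      ENNReal.ofReal (q * kolmogorovConst p q r * A ^ (q - p)) *
        lorentzIntegral p r φ ^ (p / r) := by
  rw [← Ioc_union_Ioi_eq_Ioi hA.le, lintegral_union measurableSet_Ioi (Ioc_disjoint_Ioi le_rfl)]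
  refine add_le_add ?_ (lintegral_Ioi_ofReal_mul_rpow_sub_one_le hq hqp hpr hφ hA)
  calc ∫⁻ s in Ioc 0 A, ENNReal.ofReal (q * s ^ (q - 1)) * φ s
      ≤ ∫⁻ s in Ioc 0 A, ENNReal.ofReal (q * s ^ (q - 1)) * H :=
        setLIntegral_mono' measurableSet_Ioc fun s hs => by gcongr; exact hφH s hs.1
    _ = H * ENNReal.ofReal (A ^ q) := by
      rw [lintegral_mul_const _ (by fun_prop), lintegral_Ioc_ofReal_mul_rpow_sub_one hq hA.le,
        mul_comm]

theorem lintegral_ofReal_mul_rpow_sub_one_eq_zero {φ : ℝ → ℝ≥0∞} (hφ : Measurable φ)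
    {H : ℝ≥0∞} (hφH : ∀ s ∈ Ioi 0, φ s ≤ H) (hHtop : H ≠ ⊤) (hI0 : lorentzIntegral p r φ = 0) :
    ∫⁻ s in Ioi 0, ENNReal.ofReal (q * s ^ (q - 1)) * φ s = 0 := by
  have hp : 0 < p := hq.trans hqp
  have hr : 0 < r := hp.trans hpr
  have hlim : Tendsto (fun A : ℝ => H * ENNReal.ofReal (A ^ q)) (𝓝[>] 0) (𝓝 0) := by
    have : Tendsto (fun A : ℝ => ENNReal.ofReal (A ^ q)) (𝓝 0) (𝓝 0) :=
      (ENNReal.continuous_ofReal.comp (Real.continuous_rpow_const hq.le)).tendsto' 0 0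
        (by simp [Real.zero_rpow hq.ne'])
    simpa using (ENNReal.Tendsto.const_mul this (Or.inr hHtop)).mono_left nhdsWithin_le_nhds
  refine nonpos_iff_eq_zero.1 <| ge_of_tendsto hlim <| eventually_mem_nhdsWithin.mono fun A hA => ?_
  simpa [hI0, ENNReal.zero_rpow_of_pos (div_pos hp hr)] using
    lintegral_Ioi_ofReal_mul_rpow_sub_one_le_add hq hqp hpr hφ hφH hA

theorem rpow_mul_lintegral_rpow_le_lorentzIntegral {φ : ℝ → ℝ≥0∞} (hφ : Measurable φ)
    {H : ℝ≥0∞} (hφH : ∀ s ∈ Ioi 0, φ s ≤ H) (hH0 : H ≠ 0) (hHtop : H ≠ ⊤) :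
    H ^ (1 / p - 1 / q) * (∫⁻ s in Ioi 0, ENNReal.ofReal (q * s ^ (q - 1)) * φ s) ^ (1 / q) ≤
      ENNReal.ofReal ((1 + q * kolmogorovConst p q r) ^ (1 / q)) *
        lorentzIntegral p r φ ^ (1 / r) := by
  have hp : 0 < p := hq.trans hqp
  have hr : 0 < r := hp.trans hpr
  have hK := (kolmogorovConst_pos hq hqp hpr).le
  set I := lorentzIntegral p r φ
  rcases eq_or_ne I ⊤ with hItop | hItop
  · rw [hItop, ENNReal.top_rpow_of_pos (by positivity),
      ENNReal.mul_top (ENNReal.ofReal_pos.2 (by positivity)).ne']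
    exact le_top
  rcases eq_or_ne I 0 with hI0 | hI0
  · rw [lintegral_ofReal_mul_rpow_sub_one_eq_zero hq hqp hpr hφ hφH hHtop hI0,
      ENNReal.zero_rpow_of_pos (by positivity), mul_zero]
    exact zero_le
  set N := I.toReal ^ (1 / r)
  have hN : 0 < N := Real.rpow_pos_of_pos (ENNReal.toReal_pos hI0 hItop) _
  have hIN : I ^ (1 / r) = ENNReal.ofReal N := by
    rw [← ENNReal.ofReal_rpow_of_pos (ENNReal.toReal_pos hI0 hItop), ENNReal.ofReal_toReal hItop]
  have hINp : I ^ (p / r) = ENNReal.ofReal (N ^ p) := by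
    rw [← ENNReal.ofReal_rpow_of_pos hN, ← hIN, ← ENNReal.rpow_mul, one_div_mul_eq_div]
  set H₀ := H.toReal
  have hH₀ : 0 < H₀ := ENNReal.toReal_pos hH0 hHtop
  set A := N * H₀ ^ (-p⁻¹)
  have hA : 0 < A := by positivity
  calc H ^ (1 / p - 1 / q) * (∫⁻ s in Ioi 0, ENNReal.ofReal (q * s ^ (q - 1)) * φ s) ^ (1 / q)
      ≤ ENNReal.ofReal H₀ ^ (1 / p - 1 / q) * ENNReal.ofReal
          (H₀ * A ^ q + q * kolmogorovConst p q r * A ^ (q - p) * N ^ p) ^ (1 / q) := by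
        rw [ENNReal.ofReal_toReal hHtop]
        gcongr
        refine (lintegral_Ioi_ofReal_mul_rpow_sub_one_le_add hq hqp hpr hφ hφH hA).trans_eq ?_
        rw [hINp, ← ENNReal.ofReal_mul (by positivity), ENNReal.ofReal_add (by positivity)
          (by positivity), ENNReal.ofReal_mul hH₀.le, ENNReal.ofReal_toReal hHtop]
    _ = ENNReal.ofReal ((1 + q * kolmogorovConst p q r) ^ (1 / q) * N) := by
        rw [ENNReal.ofReal_rpow_of_pos hH₀, ENNReal.ofReal_rpow_of_nonneg (by positivity)
          (by positivity), ← ENNReal.ofReal_mul (by positivity),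
          Real.rpow_mul_rpow_add_rpow_eq hp hq (by positivity) hH₀ hN]
    _ = _ := by rw [ENNReal.ofReal_mul (by positivity), hIN]

end Kolmogorov

theorem kolmogorov_lorentz_b_general (n : ℕ) (d p q r : ℝ)
    (hq : 0 < q) (hqp : q < p)
    (hpr : p < r) :
    ∃ C : ℝ, 0 < C ∧ ∀ f : (Fin n → ℝ) → ℝ, Measurable f →
      ∀ E : Set (Fin n → ℝ), 0 < hContent n d E → hContent n d E < ⊤ →
        hContent n d E ^ (1 / p - 1 / q) * (choquetSetLq n d q E f) ^ (1 / q) ≤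
          ENNReal.ofReal (C * (q * ((r - p) / (r * (p - q))) ^ ((r - p) / r)) ^ (1 / p)) *
            lorentzNorm n d p r (E.indicator f) := by
  have hK : ((r - p) / (r * (p - q))) ^ ((r - p) / r) = kolmogorovConst p q r := rfl
  have hqK : 0 < q * kolmogorovConst p q r := mul_pos hq (kolmogorovConst_pos hq hqp hpr)
  refine ⟨(1 + q * kolmogorovConst p q r) ^ (1 / q) / (q * kolmogorovConst p q r) ^ (1 / p),
    by positivity, fun f _ E hE0 hEtop => ?_⟩
  rw [hK, div_mul_cancel₀ _ (by positivity), choquetSetLq_eq_lintegral n d hq,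
    lorentzNorm_eq_lorentzIntegral]
  exact rpow_mul_lintegral_rpow_le_lorentzIntegral hq hqp hpr
    (antitone_hContent_setOf_lt n d _).measurable
    (fun _ hs => hContent_setOf_lt_abs_indicator_le n d E f (mem_Ioi.1 hs).le) hE0.ne' hEtop.ne

/-- Proposition 2.3 (b): Kolmogorov-type inequality with Lorentz quasinorm, case `p < r`. -/
theorem kolmogorov_lorentz_b (n : ℕ) (d p q r : ℝ)
    (hd : 0 < d) (hdn : d ≤ n) (hq : 0 < q) (hqp : q < p)
    (hpr : p < r) :
    ∃ C : ℝ, 0 < C ∧ ∀ f : (Fin n → ℝ) → ℝ, Measurable f →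
      ∀ E : Set (Fin n → ℝ), 0 < hContent n d E → hContent n d E < ⊤ →
        hContent n d E ^ (1 / p - 1 / q) * (choquetSetLq n d q E f) ^ (1 / q) ≤
          ENNReal.ofReal (C * (q * ((r - p) / (r * (p - q))) ^ ((r - p) / r)) ^ (1 / p)) *
            lorentzNorm n d p r (E.indicator f) :=
  kolmogorov_lorentz_b_general n d p q r hq hqp hpr
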